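/- Let n ≥ 2, let α ∈ ℂ \ {0} and let β ∈ ℂ satisfy β^{n-1} = α and 1 - 4α = e^{ikπ/n} for an integer k. Then (β - 4β^n)^n + β^{2n}/(β - 4β^n)^n = 2cos(kπ) β^n. In particular, this quantity equals -2β^n when k is odd and 2β^n when k is even. -/

import Mathlib

/-!
Since `β ^ (n - 1) = α`, the free critical value factors as `β - 4 * β ^ n = β * ζ` with
`ζ = 1 - 4 * α = exp (i k π / n)`, and `ζ ^ n = (-1) ^ k` is its own inverse. Hence
`(β ζ) ^ n + β ^ (2 n) / (β ζ) ^ n = β ^ n (ζ ^ n + ζ ^ (-n)) = 2 (-1) ^ k β ^ n`,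
and `(-1) ^ k = cos (k π)`.
-/

open Complex Real

theorem mul_pow_add_pow_two_mul_div_mul_pow {K : Type*} [Field K] (β ζ : K) (n : ℕ)
    (hζ : ζ ^ n * ζ ^ n = 1) :
    (β * ζ) ^ n + β ^ (2 * n) / (β * ζ) ^ n = 2 * ζ ^ n * β ^ n := by
  have hinv : (ζ ^ n)⁻¹ = ζ ^ n := inv_eq_of_mul_eq_one_right hζ
  rw [mul_pow, two_mul, pow_add, div_eq_mul_inv, mul_inv, hinv, ← mul_assoc,
    mul_self_mul_inv]
  ring

theorem sub_four_mul_pow_eq_mul_one_sub {R : Type*} [CommRing R] {β α : R} {n : ℕ}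
    (hn : n ≠ 0) (hβ : β ^ (n - 1) = α) :
    β - 4 * β ^ n = β * (1 - 4 * α) := by
  obtain ⟨m, rfl⟩ := Nat.exists_eq_succ_of_ne_zero hn
  rw [Nat.succ_sub_one] at hβ
  rw [← hβ, pow_succ]
  ring

theorem exp_I_mul_int_mul_pi_div_pow {n : ℕ} (hn : n ≠ 0) (k : ℤ) :
    Complex.exp (Complex.I * k * Real.pi / n) ^ n = (-1) ^ k := by
  have hangle : (n : ℂ) * (Complex.I * k * Real.pi / n) = k * (Real.pi * Complex.I) := by
    field_simp
  rw [← Complex.exp_nat_mul, hangle, Complex.exp_int_mul, Complex.exp_pi_mul_I]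

theorem stmt9_general (n : ℕ) (hn : 2 ≤ n) (k : ℤ) (α β : ℂ)
    (hβ : β ^ (n - 1) = α)
    (hk : 1 - 4 * α = Complex.exp (Complex.I * k * Real.pi / n)) :
    (β - 4 * β ^ n) ^ n + β ^ (2 * n) / (β - 4 * β ^ n) ^ n =
        2 * ((Real.cos (k * Real.pi) : ℝ) : ℂ) * β ^ n ∧
    (Odd k → (β - 4 * β ^ n) ^ n + β ^ (2 * n) / (β - 4 * β ^ n) ^ n = -(2 * β ^ n)) ∧
    (Even k → (β - 4 * β ^ n) ^ n + β ^ (2 * n) / (β - 4 * β ^ n) ^ n = 2 * β ^ n) := by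
  have hn0 : n ≠ 0 := by omega
  have hζ : (1 - 4 * α) ^ n = (-1) ^ k := by rw [hk, exp_I_mul_int_mul_pi_div_pow hn0]
  have hsq : (1 - 4 * α) ^ n * (1 - 4 * α) ^ n = 1 := by
    rw [hζ, ← zpow_add₀ (by norm_num), Even.neg_one_zpow ⟨k, rfl⟩]
  have hmain : (β - 4 * β ^ n) ^ n + β ^ (2 * n) / (β - 4 * β ^ n) ^ n =
      2 * (-1) ^ k * β ^ n := by
    rw [sub_four_mul_pow_eq_mul_one_sub hn0 hβ, mul_pow_add_pow_two_mul_div_mul_pow _ _ _ hsq,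
      hζ]
  refine ⟨?_, fun hodd => ?_, fun heven => ?_⟩
  · rw [hmain, Real.cos_int_mul_pi]
    push_cast
    ring
  · rw [hmain, hodd.neg_one_zpow]
    ring
  · rw [hmain, heven.neg_one_zpow]
    ring

/-- Core algebraic identity: if `β^(n-1) = α ≠ 0` and `1 - 4α = e^{ikπ/n}`, then
`(β - 4β^n)^n + β^(2n)/(β - 4β^n)^n = 2cos(kπ) β^n`; in particular this is `-2β^n`
for odd `k` and `2β^n` for even `k`. -/
theorem stmt9 (n : ℕ) (hn : 2 ≤ n) (k : ℤ) (α β : ℂ) (hα0 : α ≠ 0)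
    (hβ : β ^ (n - 1) = α)
    (hk : 1 - 4 * α = Complex.exp (Complex.I * k * Real.pi / n)) :
    (β - 4 * β ^ n) ^ n + β ^ (2 * n) / (β - 4 * β ^ n) ^ n =
        2 * ((Real.cos (k * Real.pi) : ℝ) : ℂ) * β ^ n ∧
    (Odd k → (β - 4 * β ^ n) ^ n + β ^ (2 * n) / (β - 4 * β ^ n) ^ n = -(2 * β ^ n)) ∧
    (Even k → (β - 4 * β ^ n) ^ n + β ^ (2 * n) / (β - 4 * β ^ n) ^ n = 2 * β ^ n) :=
  stmt9_general n hn k α β hβ hk
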